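/- Let α > 0, let μ : ℝ → ℝ be continuous and nonnegative, let φ : [0,∞) → ℝ be continuously differentiable, and let b₁ : [0,∞) → ℝ be continuously differentiable and positive. For an integer m ≥ 1 define, on the set T̄_m = {(a,t) : a ≥ 0, a + (m−1)α ≤ t < a + mα}, the function n(a,t) = (∏_{i=1}^{m} b₁(t − a − (i−1)α)) · φ(mα + a − t) · exp(−∫₀^{t−a−(m−1)α} μ(s + mα + a − t) ds) · exp(−(m−1)·∫₀^α μ(s) ds) · exp(−∫₀^a μ(s) ds). Then for every m ≥ 1, n is differentiable at every point of the interior of T̄_m and satisfies the McKendrick equation ∂n/∂t + ∂n/∂a = −μ(a) n(a,t) there; moreover m = ⌊(t−a)/α⌋ + 1 on T̄_m. -/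

import Mathlib

/-!
On each strip `T̄_m` the formula factors as `n(a,t) = B(t - a) π(a)`, where
`π(a) = exp (-∫₀^a μ)` is the survival probability and `B` depends only on the characteristic
`t - a`: an individual of age `a` at time `t` was born at time `t - a` and has survived since.
The transport operator `∂ₜ + ∂ₐ` annihilates any differentiable function of `t - a`, so it acts on
`n` only through `π`, and `π' = -μ π`. In the interior of `T̄_m` every argument of `b₁` and `φ`
is positive, so `B` is differentiable there.
-/

open MeasureTheory Real Set Filter Topology

noncomputable section

namespace McKendrick

theorem transport_derivative_of_eventuallyEq {n : ℝ × ℝ → ℝ} {B S : ℝ → ℝ} {p : ℝ × ℝ}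
    {S' : ℝ} (hB : DifferentiableAt ℝ B (p.2 - p.1)) (hS : HasDerivAt S S' p.1)
    (hn : n =ᶠ[𝓝 p] fun q => B (q.2 - q.1) * S q.1) :
    DifferentiableAt ℝ n p ∧ fderiv ℝ n p (0, 1) + fderiv ℝ n p (1, 0) = B (p.2 - p.1) * S' := by
  have hsub : HasFDerivAt (fun q : ℝ × ℝ => q.2 - q.1)
      (ContinuousLinearMap.snd ℝ ℝ ℝ - ContinuousLinearMap.fst ℝ ℝ ℝ) p :=
    hasFDerivAt_snd.sub hasFDerivAt_fst
  have hB' := hB.hasDerivAt.comp_hasFDerivAt p hsub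
  have h := (hB'.mul (hS.comp_hasFDerivAt p hasFDerivAt_fst)).congr_of_eventuallyEq hn
  refine ⟨h.differentiableAt, ?_⟩
  rw [h.fderiv]
  simp

theorem isOpenMap_snd_sub_fst : IsOpenMap fun p : ℝ × ℝ => p.2 - p.1 := by
  have : (fun p : ℝ × ℝ => p.2 - p.1) = Prod.snd ∘ (Homeomorph.shearAddRight ℝ).symm := by
    funext p; simp [neg_add_eq_sub]
  rw [this]
  exact isOpenMap_snd.comp (Homeomorph.shearAddRight ℝ).symm.isOpenMap

theorem interior_setOf_characteristic_strip (c d : ℝ) :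
    interior {p : ℝ × ℝ | 0 ≤ p.1 ∧ p.1 + c ≤ p.2 ∧ p.2 < p.1 + d} =
      {p | 0 < p.1 ∧ p.1 + c < p.2 ∧ p.2 < p.1 + d} := by
  have : {p : ℝ × ℝ | 0 ≤ p.1 ∧ p.1 + c ≤ p.2 ∧ p.2 < p.1 + d} =
      Prod.fst ⁻¹' Ici 0 ∩ (fun p : ℝ × ℝ => p.2 - p.1) ⁻¹' Ico c d := by
    ext p
    simp only [mem_ofPred_eq, mem_inter_iff, mem_preimage, mem_Ici, mem_Ico, le_sub_iff_add_le',
      sub_lt_iff_lt_add']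
  rw [this, interior_inter, ← isOpenMap_fst.preimage_interior_eq_interior_preimage continuous_fst,
    ← isOpenMap_snd_sub_fst.preimage_interior_eq_interior_preimage (by fun_prop),
    interior_Ici, interior_Ico]
  ext p
  simp only [mem_ofPred_eq, mem_inter_iff, mem_preimage, mem_Ioi, mem_Ioo, lt_sub_iff_add_lt',
    sub_lt_iff_lt_add']

theorem floor_div_eq_of_mul_le_of_lt {x α : ℝ} {k : ℤ} (h₁ : k * α ≤ x) (h₂ : x < (k + 1) * α) :
    ⌊x / α⌋ = k := by
  have hα : 0 < α := by linarith
  rw [Int.floor_eq_iff, le_div_iff₀ hα, div_lt_iff₀ hα]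
  exact ⟨h₁, h₂⟩

def survival (μ : ℝ → ℝ) (a : ℝ) : ℝ := exp (-∫ s in (0:ℝ)..a, μ s)

theorem hasDerivAt_survival {μ : ℝ → ℝ} (hμ : Continuous μ) (a : ℝ) :
    HasDerivAt (survival μ) (-μ a * survival μ a) a := by
  rw [mul_comm]
  exact (hμ.integral_hasStrictDerivAt 0 a).hasDerivAt.fun_neg.exp

def birthRate (α : ℝ) (μ φ b₁ : ℝ → ℝ) (m : ℕ) (y : ℝ) : ℝ :=
  (∏ i ∈ Finset.range m, b₁ (y - i * α)) * φ (m * α - y) *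
    exp (-∫ s in (m * α - y)..α, μ s) * exp (-((m - 1) * ∫ s in (0:ℝ)..α, μ s))

theorem formula_eq_birthRate_mul_survival (α : ℝ) (μ φ b₁ : ℝ → ℝ) (m : ℕ) (a t : ℝ) :
    (∏ i ∈ Finset.range m, b₁ (t - a - i * α)) * φ (m * α + a - t) *
        exp (-∫ s in (0:ℝ)..(t - a - (m - 1) * α), μ (s + m * α + a - t)) *
        exp (-((m - 1) * ∫ s in (0:ℝ)..α, μ s)) * exp (-∫ s in (0:ℝ)..a, μ s) =
      birthRate α μ φ b₁ m (t - a) * survival μ a := by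
  have hshift : ∫ s in (0:ℝ)..(t - a - (m - 1) * α), μ (s + m * α + a - t) =
      ∫ s in (m * α - (t - a))..α, μ s := by
    simp only [add_sub_assoc, add_assoc, intervalIntegral.integral_comp_add_right, zero_add]
    congr 1 <;> ring
  rw [hshift, birthRate, survival, sub_sub_eq_add_sub]

theorem differentiableAt_birthRate {α : ℝ} {μ φ b₁ : ℝ → ℝ} {m : ℕ} (hμ : Continuous μ)
    (hφ : DifferentiableOn ℝ φ (Ioi 0)) (hb₁ : DifferentiableOn ℝ b₁ (Ioi 0)) {y : ℝ}
    (hy₁ : (m - 1) * α < y) (hy₂ : y < m * α) :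
    DifferentiableAt ℝ (birthRate α μ φ b₁ m) y := by
  have hα : 0 < α := by linarith
  have hprod : ∀ i ∈ Finset.range m, DifferentiableAt ℝ (fun y => b₁ (y - i * α)) y := by
    intro i hi
    have hi : (i : ℝ) ≤ m - 1 := by
      have : (i : ℝ) + 1 ≤ m := by exact_mod_cast Finset.mem_range.1 hi
      linarith
    have hpos : 0 < y - i * α := by nlinarith
    exact (hb₁.differentiableAt (Ioi_mem_nhds hpos)).comp y (by fun_prop)
  have hφy : DifferentiableAt ℝ (fun y => φ (m * α - y)) y :=
    (hφ.differentiableAt (Ioi_mem_nhds (by linarith))).comp y (by fun_prop)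
  have hintegral : Differentiable ℝ (fun u => ∫ s in u..α, μ s) := fun u => by
    simp only [intervalIntegral.integral_symm α]
    exact (hμ.integral_hasStrictDerivAt α u).hasDerivAt.differentiableAt.neg
  have hexp : DifferentiableAt ℝ (fun y => exp (-∫ s in (m * α - y)..α, μ s)) y :=
    ((hintegral _).comp y (by fun_prop)).fun_neg.exp
  exact (((DifferentiableAt.fun_finsetProd hprod).mul hφy).mul hexp).mul_const _

end McKendrick

end

open McKendrick

theorem mckendrick_classical_solution_one_age_class
    (α : ℝ)
    (μ : ℝ → ℝ) (hμc : Continuous μ)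
    (φ : ℝ → ℝ) (hφ : ContDiffOn ℝ 1 φ (Set.Ici 0))
    (b₁ : ℝ → ℝ) (hb₁ : ContDiffOn ℝ 1 b₁ (Set.Ici 0))
    (m : ℕ)
    (T : Set (ℝ × ℝ))
    (hT : T = {p : ℝ × ℝ |
      0 ≤ p.1 ∧ p.1 + ((m : ℝ) - 1) * α ≤ p.2 ∧ p.2 < p.1 + (m : ℝ) * α})
    (n : ℝ × ℝ → ℝ)
    (hn : ∀ p ∈ T,
      n p = (∏ i ∈ Finset.range m, b₁ (p.2 - p.1 - (i : ℝ) * α)) *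
        φ ((m : ℝ) * α + p.1 - p.2) *
        Real.exp (-(∫ s in (0:ℝ)..(p.2 - p.1 - ((m : ℝ) - 1) * α),
          μ (s + (m : ℝ) * α + p.1 - p.2))) *
        Real.exp (-(((m : ℝ) - 1) * ∫ s in (0:ℝ)..α, μ s)) *
        Real.exp (-(∫ s in (0:ℝ)..p.1, μ s))) :
    (∀ p ∈ interior T,
      DifferentiableAt ℝ n p ∧
      fderiv ℝ n p ((0:ℝ), (1:ℝ)) + fderiv ℝ n p ((1:ℝ), (0:ℝ)) = -(μ p.1) * n p) ∧
    (∀ p ∈ T, (⌊(p.2 - p.1) / α⌋ + 1 : ℤ) = m) := by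
  have hfactor : ∀ p ∈ T, n p = birthRate α μ φ b₁ m (p.2 - p.1) * survival μ p.1 :=
    fun p hp => (hn p hp).trans (formula_eq_birthRate_mul_survival ..)
  refine ⟨fun p hp => ?_, fun p hp => ?_⟩
  · have hnear : n =ᶠ[𝓝 p] _ := eventually_of_mem (mem_interior_iff_mem_nhds.1 hp) hfactor
    rw [hT, interior_setOf_characteristic_strip] at hp
    obtain ⟨-, h₁, h₂⟩ := hp
    have hB : DifferentiableAt ℝ (birthRate α μ φ b₁ m) (p.2 - p.1) :=
      differentiableAt_birthRate hμc
        ((hφ.differentiableOn one_ne_zero).mono Ioi_subset_Ici_self)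
        ((hb₁.differentiableOn one_ne_zero).mono Ioi_subset_Ici_self) (by linarith) (by linarith)
    have h := transport_derivative_of_eventuallyEq hB (hasDerivAt_survival hμc p.1) hnear
    rw [hnear.eq_of_nhds]
    exact ⟨h.1, h.2.trans (by ring)⟩
  · rw [hT] at hp
    obtain ⟨-, h₁, h₂⟩ := hp
    rw [floor_div_eq_of_mul_le_of_lt (k := m - 1) (by push_cast; linarith) (by push_cast; linarith),
      sub_add_cancel]
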